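/- arXiv:2007.13948 — 4 statements merged into one kernel-verified Lean document; each statement's English description precedes it below -/
import Mathlib

section
/- Kalman controllability decomposition: Let n, m be positive integers, A a real n×n matrix and B a real n×m matrix. Let k be the dimension of the controllable subspace 𝔯. Then there exist an invertible real n×n matrix P with Pᵀ = P⁻¹, matrices A₁ ∈ ℝ^{k×k}, A₂ ∈ ℝ^{k×(n−k)}, A₃ ∈ ℝ^{(n−k)×(n−k)} and B₁ ∈ ℝ^{k×m} such that: (1) P⁻¹𝔯 = ℝ^k × {0} (i.e. the image of 𝔯 under multiplication by P⁻¹ is the subspace of vectors whose last n−k coordinates vanish); (2) P⁻¹AP is the 2×2 block matrix with blocks A₁, A₂ in the first row and 0, A₃ in the second row; (3) P⁻¹B equals the block column (B₁; 0); and (4) rank(B₁, A₁B₁, …, A₁^{k−1}B₁) = k. (When k = n the blocks A₂, A₃ are absent.) -/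
/-!
The controllable subspace `𝔯` is `A`-invariant (Cayley–Hamilton: every `A ^ j` is a combination
of `A ^ i` with `i < n`) and contains the columns of `B`. Take `P` orthogonal whose first `k`
columns are an orthonormal basis of `𝔯` and whose last `n - k` columns are one of `𝔯ᗮ`; then
`P⁻¹ = Pᵀ` sends `𝔯` onto `ℝ^k × {0}`, and invariance gives the zero blocks of `P⁻¹ A P` and
`P⁻¹ B`. The Kalman matrix of the transformed pair is `P⁻¹` times that of `(A, B)` and has the
Kalman matrix of `(A₁, B₁)` on top of zeros, so both have rank `k`; finally Cayley–Hamilton for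
`A₁` shows that `k` blocks already span everything that `n` blocks do.
-/

open Matrix

/-- The Kalman matrix `(B, AB, …, A^{r-1}B)` of size `n × (r·m)`,
indexed by `Fin n × (Fin r × Fin m)`. -/
noncomputable def kalmanMatrix {n m : ℕ} (A : Matrix (Fin n) (Fin n) ℝ)
    (B : Matrix (Fin n) (Fin m) ℝ) (r : ℕ) : Matrix (Fin n) (Fin r × Fin m) ℝ :=
  Matrix.of fun i jl => (A ^ (jl.1 : ℕ) * B) i jl.2

open Module Polynomial

namespace Matrix

variable {R ι ι₁ ι₂ κ : Type*}

lemma rank_fromRows_zero [CommRing R] [Fintype ι₁] [DecidableEq ι₁] [Fintype κ]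
    (M : Matrix ι₁ κ R) : (fromRows M (0 : Matrix ι₂ κ R)).rank = M.rank := by
  have hinj : Function.Injective (fromRows (1 : Matrix ι₁ ι₁ R) (0 : Matrix ι₂ ι₁ R)).mulVecLin :=
    fun v w h => by simpa [fromRows_mulVec] using congr_arg (· ∘ Sum.inl) h
  have hM : fromRows M (0 : Matrix ι₂ κ R)
      = fromRows (1 : Matrix ι₁ ι₁ R) (0 : Matrix ι₂ ι₁ R) * M := by
    rw [fromRows_mul, Matrix.one_mul, Matrix.zero_mul]
  rw [hM, rank, rank, mulVecLin_mul, LinearMap.range_comp,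
    ← (Submodule.equivMapOfInjective _ hinj _).finrank_eq]

lemma submatrix_pow_equiv [Semiring R] [Fintype ι] [DecidableEq ι] [Fintype κ] [DecidableEq κ]
    (M : Matrix ι ι R) (e : κ ≃ ι) (j : ℕ) : (M ^ j).submatrix e e = M.submatrix e e ^ j := by
  simpa using map_pow (reindexRingEquiv R e.symm) M j

lemma fromBlocks_zero_pow_mul_fromRows_zero [Semiring R] [Fintype ι₁] [DecidableEq ι₁]
    [Fintype ι₂] [DecidableEq ι₂] (A₁ : Matrix ι₁ ι₁ R) (A₂ : Matrix ι₁ ι₂ R)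
    (A₃ : Matrix ι₂ ι₂ R) (B₁ : Matrix ι₁ κ R) (j : ℕ) :
    fromBlocks A₁ A₂ 0 A₃ ^ j * fromRows B₁ (0 : Matrix ι₂ κ R) = fromRows (A₁ ^ j * B₁) 0 := by
  induction j with
  | zero => simp
  | succ j ih =>
    rw [pow_succ', Matrix.mul_assoc, ih, fromBlocks_mul_fromRows, pow_succ', Matrix.mul_assoc]
    simp

lemma exists_submatrix_eq_fromBlocks_zero [Zero R] (M : Matrix ι ι R) (e : ι₁ ⊕ ι₂ ≃ ι)
    (h : ∀ a b, M (e (Sum.inr b)) (e (Sum.inl a)) = 0) :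
    ∃ (A₁ : Matrix ι₁ ι₁ R) (A₂ : Matrix ι₁ ι₂ R) (A₃ : Matrix ι₂ ι₂ R),
      M.submatrix e e = fromBlocks A₁ A₂ 0 A₃ := by
  have h₂₁ : (M.submatrix e e).toBlocks₂₁ = 0 := by ext b a; exact h a b
  exact ⟨_, _, _, by rw [← h₂₁, fromBlocks_toBlocks]⟩

lemma exists_submatrix_eq_fromRows_zero [Zero R] (M : Matrix ι κ R) (e : ι₁ ⊕ ι₂ ≃ ι)
    (h : ∀ b j, M (e (Sum.inr b)) j = 0) :
    ∃ B₁ : Matrix ι₁ κ R, M.submatrix e id = fromRows B₁ 0 := by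
  have h₂ : (M.submatrix e id).toRows₂ = 0 := by ext b j; exact h b j
  exact ⟨_, by rw [← h₂, fromRows_toRows]⟩

end Matrix

section OrthonormalBasis

variable {𝕜 E ι : Type*} [RCLike 𝕜] [NormedAddCommGroup E] [InnerProductSpace 𝕜 E] [Fintype ι]

lemma OrthonormalBasis.mem_iff_repr_eq_zero (b : OrthonormalBasis ι 𝕜 E) {W : Submodule 𝕜 E}
    {p : ι → Prop} (hW : ∀ i, p i → b i ∈ W) (hWperp : ∀ i, ¬ p i → b i ∈ Wᗮ) {x : E} :
    x ∈ W ↔ ∀ i, ¬ p i → b.repr x i = 0 := by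
  refine ⟨fun hx i hi => ?_, fun hx => ?_⟩
  · rw [b.repr_apply_apply]
    exact Submodule.inner_left_of_mem_orthogonal hx (hWperp i hi)
  · rw [← b.sum_repr x]
    refine Submodule.sum_mem _ fun i _ => ?_
    by_cases hi : p i
    · exact Submodule.smul_mem _ _ (hW i hi)
    · simp [hx i hi]

lemma Submodule.exists_orthonormalBasis_fin_adapted [FiniteDimensional 𝕜 E] {n : ℕ}
    (hn : finrank 𝕜 E = n) (W : Submodule 𝕜 E) :
    ∃ b : OrthonormalBasis (Fin n) 𝕜 E,
      (∀ i : Fin n, (i : ℕ) < finrank 𝕜 W → b i ∈ W) ∧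
      ∀ i : Fin n, ¬ (i : ℕ) < finrank 𝕜 W → b i ∈ Wᗮ := by
  let e : Fin (finrank 𝕜 W) ⊕ Fin (finrank 𝕜 Wᗮ) ≃ Fin n :=
    finSumFinEquiv.trans (finCongr (W.finrank_add_finrank_orthogonal.trans hn))
  let b := (((stdOrthonormalBasis 𝕜 W).prod (stdOrthonormalBasis 𝕜 Wᗮ)).map
    W.orthogonalDecomposition.symm).reindex e
  refine ⟨b, fun i hi => ?_, fun i hi => ?_⟩ <;> obtain ⟨a | a, rfl⟩ := e.surjective i <;>
    simp_all [b, e]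

end OrthonormalBasis

lemma Submodule.exists_mem_orthogonalGroup_mem_iff {n : ℕ} (W : Submodule ℝ (Fin n → ℝ)) :
    ∃ P ∈ orthogonalGroup (Fin n) ℝ,
      ∀ x, x ∈ W ↔ ∀ i : Fin n, finrank ℝ W ≤ i → (Pᵀ *ᵥ x) i = 0 := by
  let W' := W.map (WithLp.linearEquiv 2 ℝ (Fin n → ℝ)).symm.toLinearMap
  have hW' : finrank ℝ W' = finrank ℝ W := LinearEquiv.finrank_map_eq _ _
  obtain ⟨b, hbW, hbW'⟩ := W'.exists_orthonormalBasis_fin_adapted finrank_euclideanSpace_fin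
  rw [hW'] at hbW hbW'
  let P := (EuclideanSpace.basisFun (Fin n) ℝ).toBasis.toMatrix b
  have hrepr : ∀ x, Pᵀ *ᵥ x = b.repr (WithLp.toLp 2 x) := fun x => by
    ext i
    simp [P, b.repr_apply_apply, mulVec, dotProduct, PiLp.inner_apply, Basis.toMatrix_apply,
      mul_comm]
  refine ⟨P, (EuclideanSpace.basisFun (Fin n) ℝ).toMatrix_orthonormalBasis_mem_orthogonal b,
    fun x => ?_⟩
  have hx : x ∈ W ↔ WithLp.toLp 2 x ∈ W' := by simp [W']
  rw [hx, b.mem_iff_repr_eq_zero hbW hbW']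
  simp [hrepr]

section KalmanRange

variable {n m : ℕ} (A : Matrix (Fin n) (Fin n) ℝ) (B : Matrix (Fin n) (Fin m) ℝ)

noncomputable def kalmanRange (r : ℕ) : Submodule ℝ (Fin n → ℝ) :=
  LinearMap.range (kalmanMatrix A B r).mulVecLin

lemma rank_kalmanMatrix (r : ℕ) : (kalmanMatrix A B r).rank = finrank ℝ (kalmanRange A B r) :=
  rfl

lemma kalmanMatrix_mulVec (r : ℕ) (w : Fin r × Fin m → ℝ) :
    kalmanMatrix A B r *ᵥ w = ∑ j : Fin r, (A ^ (j : ℕ) * B) *ᵥ fun l => w (j, l) := by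
  ext i
  simp only [mulVec, dotProduct, Finset.sum_apply, kalmanMatrix, of_apply, Fintype.sum_prod_type]

lemma mem_kalmanRange_iff {r : ℕ} {x : Fin n → ℝ} :
    x ∈ kalmanRange A B r ↔ ∃ v : Fin r → Fin m → ℝ, x = ∑ j : Fin r, (A ^ (j : ℕ) * B) *ᵥ v j := by
  constructor
  · rintro ⟨w, rfl⟩
    exact ⟨fun j l => w (j, l), kalmanMatrix_mulVec A B r w⟩
  · rintro ⟨v, rfl⟩
    exact ⟨fun jl => v jl.1 jl.2, kalmanMatrix_mulVec A B r _⟩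

lemma pow_mul_mulVec_mem_kalmanRange {r j : ℕ} (hj : j < r) (u : Fin m → ℝ) :
    (A ^ j * B) *ᵥ u ∈ kalmanRange A B r := by
  refine (mem_kalmanRange_iff A B).2 ⟨Pi.single ⟨j, hj⟩ u, ?_⟩
  rw [Finset.sum_eq_single ⟨j, hj⟩ (fun i _ hi => by simp [hi]) (by simp)]
  simp

lemma pow_mul_mulVec_mem_kalmanRange_dim (j : ℕ) (u : Fin m → ℝ) :
    (A ^ j * B) *ᵥ u ∈ kalmanRange A B n := by
  have hdeg : X ^ j %ₘ A.charpoly ∈ degreeLT ℝ n := by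
    rw [mem_degreeLT]
    simpa [A.charpoly_degree_eq_dim] using degree_modByMonic_lt (X ^ j) A.charpoly_monic
  -- Cayley–Hamilton: `A ^ j = p(A)` for `p = X ^ j %ₘ A.charpoly`, of degree `< n`.
  rw [A.pow_eq_aeval_mod_charpoly j]
  rw [degreeLT_eq_span_X_pow] at hdeg
  generalize X ^ j %ₘ A.charpoly = p at hdeg ⊢
  induction hdeg using Submodule.span_induction with
  | mem p hp =>
    obtain ⟨i, hi, rfl⟩ := Finset.mem_image.1 hp
    rw [map_pow, aeval_X]
    exact pow_mul_mulVec_mem_kalmanRange A B (Finset.mem_range.1 hi) u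
  | zero => simp
  | add p q _ _ hp hq =>
    rw [map_add, Matrix.add_mul, add_mulVec]
    exact add_mem hp hq
  | smul c p _ hp =>
    rw [map_smul, Matrix.smul_mul, smul_mulVec]
    exact Submodule.smul_mem _ c hp

lemma kalmanRange_mono : Monotone (kalmanRange A B) := by
  intro r s hrs x hx
  obtain ⟨v, rfl⟩ := (mem_kalmanRange_iff A B).1 hx
  exact Submodule.sum_mem _ fun j _ => pow_mul_mulVec_mem_kalmanRange A B (j.2.trans_le hrs) _

lemma kalmanRange_eq_of_le {r : ℕ} (hr : n ≤ r) : kalmanRange A B r = kalmanRange A B n := by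
  refine le_antisymm (fun x hx => ?_) (kalmanRange_mono A B hr)
  obtain ⟨v, rfl⟩ := (mem_kalmanRange_iff A B).1 hx
  exact Submodule.sum_mem _ fun j _ => pow_mul_mulVec_mem_kalmanRange_dim A B j _

lemma mulVec_mem_kalmanRange {x : Fin n → ℝ} (hx : x ∈ kalmanRange A B n) :
    A *ᵥ x ∈ kalmanRange A B n := by
  obtain ⟨v, rfl⟩ := (mem_kalmanRange_iff A B).1 hx
  rw [mulVec_sum]
  refine Submodule.sum_mem _ fun j _ => ?_
  rw [mulVec_mulVec, ← Matrix.mul_assoc, ← pow_succ']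
  exact pow_mul_mulVec_mem_kalmanRange_dim A B _ _

lemma mulVec_mem_kalmanRange_dim (u : Fin m → ℝ) : B *ᵥ u ∈ kalmanRange A B n := by
  simpa using pow_mul_mulVec_mem_kalmanRange_dim A B 0 u

lemma kalmanMatrix_conj {P Q : Matrix (Fin n) (Fin n) ℝ} (hPQ : P * Q = 1) (r : ℕ) :
    kalmanMatrix (Q * A * P) (Q * B) r = Q * kalmanMatrix A B r := by
  have hconj : ∀ j : ℕ, (Q * A * P) ^ j * Q = Q * A ^ j := fun j =>
    (SemiconjBy.pow_right (by simp [SemiconjBy, Matrix.mul_assoc, hPQ]) j).eq.symm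
  ext i ⟨j, l⟩
  change ((Q * A * P) ^ (j : ℕ) * (Q * B)) i l = ∑ s, Q i s * (A ^ (j : ℕ) * B) s l
  rw [← Matrix.mul_assoc, hconj, Matrix.mul_assoc, Matrix.mul_apply]

end KalmanRange

section Blocks

variable {n m k l : ℕ} {A : Matrix (Fin n) (Fin n) ℝ} {B : Matrix (Fin n) (Fin m) ℝ}
  {A₁ : Matrix (Fin k) (Fin k) ℝ} {A₂ : Matrix (Fin k) (Fin l) ℝ} {A₃ : Matrix (Fin l) (Fin l) ℝ}
  {B₁ : Matrix (Fin k) (Fin m) ℝ} {e : Fin k ⊕ Fin l ≃ Fin n}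

lemma kalmanMatrix_submatrix_of_fromBlocks (hA : A.submatrix e e = fromBlocks A₁ A₂ 0 A₃)
    (hB : B.submatrix e id = fromRows B₁ 0) (r : ℕ) :
    (kalmanMatrix A B r).submatrix e id = fromRows (kalmanMatrix A₁ B₁ r) 0 := by
  ext i ⟨j, l⟩
  have hj : (A ^ (j : ℕ) * B).submatrix e id = fromRows (A₁ ^ (j : ℕ) * B₁) 0 := by
    rw [← submatrix_mul_equiv _ _ _ e, submatrix_pow_equiv, hA, hB,
      fromBlocks_zero_pow_mul_fromRows_zero]
  cases i <;> exact congr_fun (congr_fun hj _) l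

lemma rank_kalmanMatrix_of_fromBlocks (hA : A.submatrix e e = fromBlocks A₁ A₂ 0 A₃)
    (hB : B.submatrix e id = fromRows B₁ 0) (r : ℕ) :
    (kalmanMatrix A₁ B₁ r).rank = (kalmanMatrix A B r).rank := by
  rw [← rank_fromRows_zero (ι₂ := Fin l), ← kalmanMatrix_submatrix_of_fromBlocks hA hB,
    ← Equiv.coe_refl, rank_submatrix]

end Blocks

def finSumFinSubEquiv {k n : ℕ} (h : k ≤ n) : Fin k ⊕ Fin (n - k) ≃ Fin n :=
  finSumFinEquiv.trans (finCongr (Nat.add_sub_cancel' h))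

@[simp]
lemma finSumFinSubEquiv_inl_val {k n : ℕ} (h : k ≤ n) (a : Fin k) :
    (finSumFinSubEquiv h (Sum.inl a) : ℕ) = a := by
  simp [finSumFinSubEquiv]

@[simp]
lemma finSumFinSubEquiv_inr_val {k n : ℕ} (h : k ≤ n) (b : Fin (n - k)) :
    (finSumFinSubEquiv h (Sum.inr b) : ℕ) = k + b := by
  simp [finSumFinSubEquiv]

section AdaptedCoordinates

variable {n m k : ℕ} {W : Submodule ℝ (Fin n → ℝ)} {P Q : Matrix (Fin n) (Fin n) ℝ}

lemma image_mulVec_eq_of_mem_iff (hQP : Q * P = 1)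
    (hW : ∀ x, x ∈ W ↔ ∀ i : Fin n, k ≤ i → (Q *ᵥ x) i = 0) :
    (fun x => Q *ᵥ x) '' W = {y | ∀ i : Fin n, k ≤ i → y i = 0} := by
  have hsurj : Function.Surjective fun x => Q *ᵥ x := fun y =>
    ⟨P *ᵥ y, by simp only [mulVec_mulVec, hQP, one_mulVec]⟩
  rw [← Set.image_preimage_eq {y : Fin n → ℝ | ∀ i : Fin n, k ≤ i → y i = 0} hsurj]
  exact congrArg _ (Set.ext hW)

lemma mul_apply_eq_zero_of_mulVec_single_mem (hW : ∀ x, x ∈ W ↔ ∀ i : Fin n, k ≤ i → (Q *ᵥ x) i = 0)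
    {p : ℕ} {M : Matrix (Fin n) (Fin p) ℝ} {j : Fin p} (hM : M *ᵥ Pi.single j 1 ∈ W) {i : Fin n}
    (hi : k ≤ i) : (Q * M) i j = 0 := by
  rw [← (hW _).1 hM i hi, mulVec_mulVec, mulVec_single_one]
  rfl

lemma exists_conj_submatrix_eq_fromBlocks (hQP : Q * P = 1)
    (hW : ∀ x, x ∈ W ↔ ∀ i : Fin n, k ≤ i → (Q *ᵥ x) i = 0) (hkn : k ≤ n)
    {A : Matrix (Fin n) (Fin n) ℝ} (hA : ∀ x ∈ W, A *ᵥ x ∈ W) :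
    ∃ (A₁ : Matrix (Fin k) (Fin k) ℝ) (A₂ : Matrix (Fin k) (Fin (n - k)) ℝ)
      (A₃ : Matrix (Fin (n - k)) (Fin (n - k)) ℝ),
      (Q * A * P).submatrix (finSumFinSubEquiv hkn) (finSumFinSubEquiv hkn)
        = fromBlocks A₁ A₂ 0 A₃ := by
  refine exists_submatrix_eq_fromBlocks_zero _ _ fun a b => ?_
  have hPa : P *ᵥ Pi.single (finSumFinSubEquiv hkn (Sum.inl a)) 1 ∈ W := by
    rw [hW, mulVec_mulVec, hQP, one_mulVec]
    refine fun i hi => Pi.single_eq_of_ne ?_ _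
    rintro rfl
    simp at hi
    omega
  rw [Matrix.mul_assoc]
  refine mul_apply_eq_zero_of_mulVec_single_mem hW ?_ (by simp)
  rw [← mulVec_mulVec]
  exact hA _ hPa

lemma exists_mul_submatrix_eq_fromRows
    (hW : ∀ x, x ∈ W ↔ ∀ i : Fin n, k ≤ i → (Q *ᵥ x) i = 0) (hkn : k ≤ n)
    {B : Matrix (Fin n) (Fin m) ℝ} (hB : ∀ u, B *ᵥ u ∈ W) :
    ∃ B₁ : Matrix (Fin k) (Fin m) ℝ, (Q * B).submatrix (finSumFinSubEquiv hkn) id = fromRows B₁ 0 :=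
  exists_submatrix_eq_fromRows_zero _ _ fun _ _ =>
    mul_apply_eq_zero_of_mulVec_single_mem hW (hB _) (by simp)

end AdaptedCoordinates

lemma rank_kalmanMatrix_of_conj_fromBlocks {n m k : ℕ} {A : Matrix (Fin n) (Fin n) ℝ}
    {B : Matrix (Fin n) (Fin m) ℝ} {P Q : Matrix (Fin n) (Fin n) ℝ} (hQP : Q * P = 1)
    (hkn : k ≤ n) {A₁ : Matrix (Fin k) (Fin k) ℝ} {A₂ : Matrix (Fin k) (Fin (n - k)) ℝ}
    {A₃ : Matrix (Fin (n - k)) (Fin (n - k)) ℝ} {B₁ : Matrix (Fin k) (Fin m) ℝ}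
    (hA : (Q * A * P).submatrix (finSumFinSubEquiv hkn) (finSumFinSubEquiv hkn)
      = fromBlocks A₁ A₂ 0 A₃)
    (hB : (Q * B).submatrix (finSumFinSubEquiv hkn) id = fromRows B₁ 0) :
    (kalmanMatrix A₁ B₁ k).rank = (kalmanMatrix A B n).rank := by
  calc (kalmanMatrix A₁ B₁ k).rank
      = (kalmanMatrix A₁ B₁ n).rank := by
        rw [rank_kalmanMatrix, rank_kalmanMatrix, kalmanRange_eq_of_le A₁ B₁ hkn]
    _ = (kalmanMatrix (Q * A * P) (Q * B) n).rank := rank_kalmanMatrix_of_fromBlocks hA hB n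
    _ = (kalmanMatrix A B n).rank := by
      rw [kalmanMatrix_conj A B (mul_eq_one_comm.1 hQP),
        rank_mul_eq_right_of_isUnit_det _ _ (isUnit_det_of_right_inverse hQP)]

theorem kalman_controllability_decomposition_general
    (n m : ℕ)
    (A : Matrix (Fin n) (Fin n) ℝ) (B : Matrix (Fin n) (Fin m) ℝ)
    (R : Set (Fin n → ℝ))
    (hR : R = {x : Fin n → ℝ | ∃ v : Fin n → (Fin m → ℝ),
      x = ∑ j : Fin n, (A ^ (j : ℕ) * B).mulVec (v j)})
    (k : ℕ) (hk : k = Module.finrank ℝ (Submodule.span ℝ R)) :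
    ∃ (hkn : k ≤ n) (P : Matrix (Fin n) (Fin n) ℝ),
      IsUnit P ∧ Pᵀ = P⁻¹ ∧
      ∃ (A₁ : Matrix (Fin k) (Fin k) ℝ) (A₂ : Matrix (Fin k) (Fin (n - k)) ℝ)
        (A₃ : Matrix (Fin (n - k)) (Fin (n - k)) ℝ) (B₁ : Matrix (Fin k) (Fin m) ℝ),
        -- (1)  P⁻¹ 𝔯 = ℝ^k × {0}
        (fun x : Fin n → ℝ => P⁻¹.mulVec x) '' R
            = {x : Fin n → ℝ | ∀ i : Fin n, k ≤ (i : ℕ) → x i = 0} ∧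
        -- (2)  P⁻¹ A P is block upper triangular with blocks A₁, A₂, 0, A₃
        (P⁻¹ * A * P).submatrix (finSumFinEquiv.trans (finCongr (Nat.add_sub_cancel' hkn)))
            (finSumFinEquiv.trans (finCongr (Nat.add_sub_cancel' hkn)))
          = Matrix.fromBlocks A₁ A₂ 0 A₃ ∧
        -- (3)  P⁻¹ B = (B₁; 0)
        (P⁻¹ * B).submatrix (finSumFinEquiv.trans (finCongr (Nat.add_sub_cancel' hkn))) id
          = Matrix.fromRows B₁ 0 ∧
        -- (4)  rank (B₁, A₁B₁, …, A₁^{k-1}B₁) = k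
        (kalmanMatrix A₁ B₁ k).rank = k := by
  have hRK : R = kalmanRange A B n := by
    ext x; rw [hR, Set.mem_ofPred_eq, SetLike.mem_coe, mem_kalmanRange_iff]
  rw [hRK, Submodule.span_eq] at hk
  subst hRK
  have hkn : k ≤ n := hk ▸ (Submodule.finrank_le _).trans_eq (finrank_fin_fun ℝ)
  obtain ⟨P, hP, hPW⟩ := (kalmanRange A B n).exists_mem_orthogonalGroup_mem_iff
  rw [← hk] at hPW
  have hPTP : Pᵀ * P = 1 := (mem_orthogonalGroup_iff' _ _).1 hP
  have hPinv : P⁻¹ = Pᵀ := inv_eq_left_inv hPTP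
  obtain ⟨A₁, A₂, A₃, hA⟩ :=
    exists_conj_submatrix_eq_fromBlocks hPTP hPW hkn fun _ => mulVec_mem_kalmanRange A B
  obtain ⟨B₁, hB⟩ := exists_mul_submatrix_eq_fromRows hPW hkn (mulVec_mem_kalmanRange_dim A B)
  refine ⟨hkn, P, IsUnit.of_mul_eq_one_right _ hPTP, hPinv.symm, A₁, A₂, A₃, B₁, ?_⟩
  rw [hPinv, rank_kalmanMatrix_of_conj_fromBlocks hPTP hkn hA hB, rank_kalmanMatrix, ← hk]
  exact ⟨image_mulVec_eq_of_mem_iff hPTP hPW, hA, hB, rfl⟩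

/-- **Kalman controllability decomposition.** -/
theorem kalman_controllability_decomposition
    (n m : ℕ) (hn : 0 < n) (hm : 0 < m)
    (A : Matrix (Fin n) (Fin n) ℝ) (B : Matrix (Fin n) (Fin m) ℝ)
    (R : Set (Fin n → ℝ))
    (hR : R = {x : Fin n → ℝ | ∃ v : Fin n → (Fin m → ℝ),
      x = ∑ j : Fin n, (A ^ (j : ℕ) * B).mulVec (v j)})
    (k : ℕ) (hk : k = Module.finrank ℝ (Submodule.span ℝ R)) :
    ∃ (hkn : k ≤ n) (P : Matrix (Fin n) (Fin n) ℝ),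
      IsUnit P ∧ Pᵀ = P⁻¹ ∧
      ∃ (A₁ : Matrix (Fin k) (Fin k) ℝ) (A₂ : Matrix (Fin k) (Fin (n - k)) ℝ)
        (A₃ : Matrix (Fin (n - k)) (Fin (n - k)) ℝ) (B₁ : Matrix (Fin k) (Fin m) ℝ),
        -- (1)  P⁻¹ 𝔯 = ℝ^k × {0}
        (fun x : Fin n → ℝ => P⁻¹.mulVec x) '' R
            = {x : Fin n → ℝ | ∀ i : Fin n, k ≤ (i : ℕ) → x i = 0} ∧
        -- (2)  P⁻¹ A P is block upper triangular with blocks A₁, A₂, 0, A₃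
        (P⁻¹ * A * P).submatrix (finSumFinEquiv.trans (finCongr (Nat.add_sub_cancel' hkn)))
            (finSumFinEquiv.trans (finCongr (Nat.add_sub_cancel' hkn)))
          = Matrix.fromBlocks A₁ A₂ 0 A₃ ∧
        -- (3)  P⁻¹ B = (B₁; 0)
        (P⁻¹ * B).submatrix (finSumFinEquiv.trans (finCongr (Nat.add_sub_cancel' hkn))) id
          = Matrix.fromRows B₁ 0 ∧
        -- (4)  rank (B₁, A₁B₁, …, A₁^{k-1}B₁) = k
        (kalmanMatrix A₁ B₁ k).rank = k :=
  kalman_controllability_decomposition_general n m A B R hR k hk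
end

section
/- Dyadic telescoping lemma: Let C > 0 and T > 0. Let (a_j)_{j∈ℕ} be a bounded sequence of nonnegative real numbers and (I_j)_{j∈ℕ} a sequence of nonnegative real numbers such that for every j ∈ ℕ: a_j ≤ C · e^{C·2^j/T} · I_j^{2/3} · a_{j+1}^{1/3}. Then a_0 ≤ (2/(3√3)) · C^{3/2} · e^{3C/T} · Σ_{j=0}^{∞} I_j, where the sum on the right is taken in [0, +∞] (so the conclusion is trivially true when the series diverges). -/
/-!
With `θ = 1/3`, `c j = C e^{C 2^j / T}` and the weights `w j = (1 - θ) θ^j` (of total mass 1),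
the sequence `y j = θ^j log a_j` satisfies `y j ≤ θ^j log c_j + w_j log I_j + y (j+1)`.
Gibbs' inequality `w log I ≤ I / s + w log (w s) - w`, with `s = Σ I_j`, turns the right-hand side
into a summable sequence; telescoping, with `y n ≤ θ^n log M → 0` by boundedness of `a`, gives
`log a_0 ≤ Σ θ^j log c_j + Σ w_j log w_j + log s`. Exponentiating,
`e^{Σ w_j log w_j} = (1 - θ) θ^{θ/(1-θ)} = 2/(3√3)` and `e^{Σ θ^j log c_j} = C^{3/2} e^{3C/T}`.
-/

open Filter Finset Real Topology

lemma mul_log_le_div_add_mul_log {w x s : ℝ} (hw : 0 < w) (hx : 0 < x) (hs : 0 < s) :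
    w * log x ≤ x / s + w * log (w * s) - w := by
  have hws : 0 < w * s := mul_pos hw hs
  have h := mul_le_mul_of_nonneg_left (log_le_sub_one_of_pos (div_pos hx hws)) hw.le
  rw [log_div hx.ne' hws.ne'] at h
  have : w * (x / (w * s)) = x / s := by field_simp
  linarith

lemma le_tsum_of_le_add_succ {y d u : ℕ → ℝ} (hd : Summable d)
    (hstep : ∀ j, y j ≤ d j + y (j + 1)) (hu : Tendsto u atTop (𝓝 0)) (hyu : ∀ n, y n ≤ u n) :
    y 0 ≤ ∑' j, d j := by
  have htel : ∀ n, y 0 ≤ ∑ j ∈ range n, d j + y n := by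
    intro n
    induction n with
    | zero => simp
    | succ n ih => rw [sum_range_succ]; linarith [hstep n]
  have hlim := hd.hasSum.tendsto_sum_nat.add hu
  rw [add_zero] at hlim
  exact ge_of_tendsto' hlim fun n => (htel n).trans (by linarith [hyu n])

lemma hasSum_geometric_weight {θ : ℝ} (hθ0 : 0 ≤ θ) (hθ1 : θ < 1) :
    HasSum (fun j : ℕ => (1 - θ) * θ ^ j) 1 := by
  have := (hasSum_geometric_of_lt_one hθ0 hθ1).mul_left (1 - θ)
  rwa [mul_inv_cancel₀ (sub_ne_zero.2 hθ1.ne')] at this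

lemma hasSum_geometric_weight_mul_log {θ : ℝ} (hθ0 : 0 < θ) (hθ1 : θ < 1) :
    HasSum (fun j : ℕ => (1 - θ) * θ ^ j * log ((1 - θ) * θ ^ j))
      (log ((1 - θ) * θ ^ (θ / (1 - θ)))) := by
  have h1θ : 0 < 1 - θ := sub_pos.2 hθ1
  have hj : HasSum (fun j : ℕ => (j : ℝ) * θ ^ j) (θ / (1 - θ) ^ 2) :=
    hasSum_coe_mul_geometric_of_norm_lt_one (by rwa [norm_of_nonneg hθ0.le])
  have hterm (j : ℕ) : (1 - θ) * θ ^ j * log ((1 - θ) * θ ^ j)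
      = log (1 - θ) * ((1 - θ) * θ ^ j) + (1 - θ) * log θ * (j * θ ^ j) := by
    rw [log_mul h1θ.ne' (by positivity), log_pow]
    ring
  have hvalue : log ((1 - θ) * θ ^ (θ / (1 - θ)))
      = log (1 - θ) * 1 + (1 - θ) * log θ * (θ / (1 - θ) ^ 2) := by
    rw [log_mul h1θ.ne' (by positivity), log_rpow hθ0]
    field_simp
  simp_rw [hterm, hvalue]
  exact ((hasSum_geometric_weight hθ0.le hθ1).mul_left _).add (hj.mul_left _)

lemma pos_and_pos_of_pos_mul_rpow {b x y p q : ℝ} (hp : p ≠ 0) (hq : q ≠ 0) (hx : 0 ≤ x)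
    (hy : 0 ≤ y) (h : 0 < b * x ^ p * y ^ q) : 0 < x ∧ 0 < y := by
  refine ⟨hx.lt_of_ne ?_, hy.lt_of_ne ?_⟩ <;> rintro rfl <;> simp [zero_rpow, hp, hq] at h

lemma log_le_of_le_mul_rpow {b x y z p q : ℝ} (hb : 0 < b) (hx : 0 < x) (hy : 0 < y)
    (hz : 0 < z) (h : z ≤ b * x ^ p * y ^ q) :
    log z ≤ log b + p * log x + q * log y := by
  have := log_le_log hz h
  rwa [log_mul (by positivity) (by positivity), log_mul hb.ne' (by positivity),
    log_rpow hx, log_rpow hy] at this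

theorem le_exp_tsum_mul_tsum_of_le_mul_rpow {θ : ℝ} (hθ0 : 0 < θ) (hθ1 : θ < 1)
    {a c I : ℕ → ℝ} (ha : ∀ j, 0 ≤ a j) (ha_bdd : ∃ M, ∀ j, a j ≤ M) (hc : ∀ j, 0 < c j)
    (hI : ∀ j, 0 ≤ I j) (hIsum : Summable I) (hcsum : Summable fun j => θ ^ j * log (c j))
    (hrec : ∀ j, a j ≤ c j * I j ^ (1 - θ) * a (j + 1) ^ θ) :
    a 0 ≤ exp (∑' j, θ ^ j * log (c j)) * ((1 - θ) * θ ^ (θ / (1 - θ))) * ∑' j, I j := by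
  rcases (ha 0).eq_or_lt with ha0 | ha0
  · rw [← ha0]
    have : 0 ≤ ∑' j, I j := tsum_nonneg hI
    positivity
  have hstep_pos (j : ℕ) (hj : 0 < a j) : 0 < I j ∧ 0 < a (j + 1) :=
    pos_and_pos_of_pos_mul_rpow (sub_pos.2 hθ1).ne' hθ0.ne' (hI j) (ha _) (hj.trans_le (hrec j))
  have ha_pos : ∀ j, 0 < a j := Nat.rec ha0 fun j hj => (hstep_pos j hj).2
  have hI_pos (j : ℕ) : 0 < I j := (hstep_pos j (ha_pos j)).1
  set s := ∑' j, I j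
  have hs : 0 < s := hIsum.tsum_pos hI 0 (hI_pos 0)
  set w : ℕ → ℝ := fun j => (1 - θ) * θ ^ j
  set W := (1 - θ) * θ ^ (θ / (1 - θ))
  set d : ℕ → ℝ := fun j => θ ^ j * log (c j) + (I j / s - w j) + w j * log (w j) + w j * log s
  have hd : HasSum d (∑' j, θ ^ j * log (c j) + log W + log s) := by
    have hw := hasSum_geometric_weight hθ0.le hθ1
    convert ((hcsum.hasSum.add ((hIsum.hasSum.div_const s).sub hw)).add
      (hasSum_geometric_weight_mul_log hθ0 hθ1)).add (hw.mul_right (log s)) using 1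
    rw [div_self hs.ne']
    ring
  have hstep (j : ℕ) : θ ^ j * log (a j) ≤ d j + θ ^ (j + 1) * log (a (j + 1)) := by
    have hlog := mul_le_mul_of_nonneg_left
      (log_le_of_le_mul_rpow (hc j) (hI_pos j) (ha_pos (j + 1)) (ha_pos j) (hrec j))
      (pow_nonneg hθ0.le j)
    have hgibbs := mul_log_le_div_add_mul_log (by positivity : 0 < w j) (hI_pos j) hs
    rw [log_mul (by positivity) hs.ne'] at hgibbs
    simp only [d, w, pow_succ] at hgibbs ⊢
    linarith
  obtain ⟨M, hM⟩ := ha_bdd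
  have hlim : Tendsto (fun n => θ ^ n * log M) atTop (𝓝 0) := by
    simpa using (tendsto_pow_atTop_nhds_zero_of_lt_one hθ0.le hθ1).mul_const (log M)
  have hbound := le_tsum_of_le_add_succ hd.summable hstep hlim fun n =>
    mul_le_mul_of_nonneg_left (log_le_log (ha_pos n) (hM n)) (pow_nonneg hθ0.le n)
  rw [hd.tsum_eq, pow_zero, one_mul] at hbound
  calc a 0 = exp (log (a 0)) := (exp_log ha0).symm
    _ ≤ exp (∑' j, θ ^ j * log (c j) + log W + log s) := exp_le_exp.2 hbound
    _ = _ := by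
      rw [exp_add, exp_add, exp_log hs, exp_log (by positivity)]

lemma hasSum_third_pow_mul_log_mul_exp {C : ℝ} (hC : 0 < C) (T : ℝ) :
    HasSum (fun j : ℕ => (1 / 3 : ℝ) ^ j * log (C * exp (C * 2 ^ j / T)))
      (log (C ^ ((3 : ℝ) / 2) * exp (3 * C / T))) := by
  have hterm (j : ℕ) : (1 / 3 : ℝ) ^ j * log (C * exp (C * 2 ^ j / T))
      = log C * (1 / 3 : ℝ) ^ j + C / T * (2 / 3 : ℝ) ^ j := by
    rw [log_mul hC.ne' (exp_pos _).ne', log_exp, div_pow, div_pow, one_pow]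
    ring
  have hvalue : log (C ^ ((3 : ℝ) / 2) * exp (3 * C / T))
      = log C * (1 - 1 / 3)⁻¹ + C / T * (1 - 2 / 3)⁻¹ := by
    rw [log_mul (by positivity) (exp_pos _).ne', log_exp, log_rpow hC]
    ring
  simp_rw [hterm, hvalue]
  exact ((hasSum_geometric_of_lt_one (by norm_num) (by norm_num)).mul_left _).add
    ((hasSum_geometric_of_lt_one (by norm_num) (by norm_num)).mul_left _)

lemma one_sub_third_mul_third_rpow :
    (1 - 1 / 3 : ℝ) * (1 / 3) ^ ((1 / 3 : ℝ) / (1 - 1 / 3)) = 2 / (3 * √3) := by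
  rw [show (1 / 3 : ℝ) / (1 - 1 / 3) = 1 / 2 by norm_num, ← sqrt_eq_rpow, sqrt_div' _ (by norm_num)]
  field_simp
  norm_num

theorem dyadic_telescoping_general
    (C T : ℝ) (hC : 0 < C)
    (a : ℕ → ℝ) (ha_nonneg : ∀ j, 0 ≤ a j) (ha_bdd : ∃ M : ℝ, ∀ j, a j ≤ M)
    (I : ℕ → ℝ) (hI_nonneg : ∀ j, 0 ≤ I j)
    (hrec : ∀ j : ℕ,
      a j ≤ C * Real.exp (C * 2 ^ j / T) * (I j) ^ ((2:ℝ)/3) * (a (j+1)) ^ ((1:ℝ)/3)) :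
    ENNReal.ofReal (a 0)
      ≤ ENNReal.ofReal ((2 / (3 * Real.sqrt 3)) * C ^ ((3:ℝ)/2) * Real.exp (3 * C / T))
          * ∑' j : ℕ, ENNReal.ofReal (I j) := by
  have hK : 0 < 2 / (3 * √3) * C ^ ((3 : ℝ) / 2) * exp (3 * C / T) := by positivity
  by_cases htop : ∑' j, ENNReal.ofReal (I j) = ⊤
  · rw [htop, ENNReal.mul_top (ENNReal.ofReal_pos.2 hK).ne']
    exact le_top
  have hIsum : Summable I := by
    simpa [ENNReal.toReal_ofReal (hI_nonneg _)] using ENNReal.summable_toReal htop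
  rw [← ENNReal.ofReal_tsum_of_nonneg hI_nonneg hIsum, ← ENNReal.ofReal_mul hK.le]
  refine ENNReal.ofReal_le_ofReal ?_
  have hc := hasSum_third_pow_mul_log_mul_exp hC T
  have hrec' (j : ℕ) := (show (1 : ℝ) - 1 / 3 = 2 / 3 by norm_num) ▸ hrec j
  have := le_exp_tsum_mul_tsum_of_le_mul_rpow (by norm_num) (by norm_num) ha_nonneg ha_bdd
    (fun j => by positivity) hI_nonneg hIsum hc.summable hrec'
  rw [hc.tsum_eq, exp_log (by positivity), one_sub_third_mul_third_rpow] at this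
  exact this.trans_eq (by ring)

/-- **Dyadic telescoping lemma.** If a bounded nonnegative sequence `a` satisfies
`a j ≤ C e^{C 2^j / T} I_j^{2/3} a_{j+1}^{1/3}` for all `j`, then
`a 0 ≤ (2/(3√3)) C^{3/2} e^{3C/T} Σ_j I_j`, the sum being taken in `[0, +∞]`. -/
theorem dyadic_telescoping
    (C T : ℝ) (hC : 0 < C) (hT : 0 < T)
    (a : ℕ → ℝ) (ha_nonneg : ∀ j, 0 ≤ a j) (ha_bdd : ∃ M : ℝ, ∀ j, a j ≤ M)
    (I : ℕ → ℝ) (hI_nonneg : ∀ j, 0 ≤ I j)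
    (hrec : ∀ j : ℕ,
      a j ≤ C * Real.exp (C * 2 ^ j / T) * (I j) ^ ((2:ℝ)/3) * (a (j+1)) ^ ((1:ℝ)/3)) :
    ENNReal.ofReal (a 0)
      ≤ ENNReal.ofReal ((2 / (3 * Real.sqrt 3)) * C ^ ((3:ℝ)/2) * Real.exp (3 * C / T))
          * ∑' j : ℕ, ENNReal.ofReal (I j) :=
  dyadic_telescoping_general C T hC a ha_nonneg ha_bdd I hI_nonneg hrec
end

section
/- Cayley–Hamilton unique continuation for the output of the matrix exponential: Let n, m be positive integers, A ∈ ℝ^{n×n}, B ∈ ℝ^{n×m}, and v ∈ ℝⁿ. The following three assertions are equivalent: (a) Bᵀ e^{tAᵀ} v = 0 for every t ≥ 0; (b) Bᵀ (Aᵀ)^j v = 0 for every j ∈ {0, 1, …, n−1}; (c) v is orthogonal to the controllable subspace 𝔯 (that is, ⟨v, w⟩ = 0 for every w ∈ 𝔯). -/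
/-!
Put `L M := Bᵀ (M v)`, a linear functional on matrices. Differentiating `t ↦ L (e^{tAᵀ})`
repeatedly on `[0, ∞)` and evaluating at `t = 0` shows that (a) makes `L` vanish on every power
of `Aᵀ`; conversely, vanishing on all powers kills every term of the exponential series. By
Cayley–Hamilton the powers `(Aᵀ)^k` lie in the span of the first `n` ones, which gives (a) ↔ (b).
Finally `⟨v, A^j B w⟩ = ⟨Bᵀ (Aᵀ)^j v, w⟩`, so (b) says exactly that `v` is orthogonal to every
generator of the controllable subspace.
-/

open Matrix NormedSpace Polynomial Set

section ExpOutput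

variable {𝔸 E : Type*} [NormedRing 𝔸] [NormedAlgebra ℝ 𝔸] [CompleteSpace 𝔸]
  [NormedAddCommGroup E] [NormedSpace ℝ E]

theorem ContinuousLinearMap.map_exp_smul_mul_pow_eq_zero (L : 𝔸 →L[ℝ] E) (a : 𝔸)
    (h : ∀ t : ℝ, 0 ≤ t → L (exp (t • a)) = 0) (k : ℕ) :
    ∀ t : ℝ, 0 ≤ t → L (exp (t • a) * a ^ k) = 0 := by
  induction k with
  | zero => simpa using h
  | succ k ih =>
    intro t ht
    have hderiv : HasDerivAt (fun u : ℝ => L (exp (u • a) * a ^ k))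
        (L (exp (t • a) * a * a ^ k)) t :=
      (L.comp ((ContinuousLinearMap.mul ℝ 𝔸).flip (a ^ k))).hasFDerivAt.comp_hasDerivAt t
        (hasDerivAt_exp_smul_const a t)
    have hzero : HasDerivWithinAt (fun u : ℝ => L (exp (u • a) * a ^ k)) 0 (Ici 0) t :=
      (hasDerivWithinAt_const t _ 0).congr ih (ih t ht)
    rw [pow_succ', ← mul_assoc]
    exact (uniqueDiffOn_Ici 0 t ht).eq_deriv _ hderiv.hasDerivWithinAt hzero

theorem ContinuousLinearMap.map_exp_smul_eq_zero_iff (L : 𝔸 →L[ℝ] E) (a : 𝔸) :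
    (∀ t : ℝ, 0 ≤ t → L (exp (t • a)) = 0) ↔ ∀ k : ℕ, L (a ^ k) = 0 := by
  refine ⟨fun h k => by simpa using L.map_exp_smul_mul_pow_eq_zero a h k 0 le_rfl,
    fun h t _ => ?_⟩
  rw [exp_eq_tsum ℝ, L.map_tsum (expSeries_summable' (t • a))]
  simp [_root_.smul_pow, h]

end ExpOutput

section CayleyHamilton

variable {n R : Type*} [Fintype n] [DecidableEq n] [CommRing R] [Nontrivial R]

theorem Matrix.pow_mem_span_pow_lt_card (M : Matrix n n R) (k : ℕ) :
    M ^ k ∈ Submodule.span R ((M ^ ·) '' Iio (Fintype.card n)) := by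
  rw [pow_eq_aeval_mod_charpoly, aeval_def, eval₂_eq_sum]
  refine Submodule.sum_mem _ fun i hi => ?_
  have hi : i < Fintype.card n := by
    have := (le_degree_of_mem_supp i hi).trans_lt
      ((degree_modByMonic_lt _ M.charpoly_monic).trans_eq M.charpoly_degree_eq_dim)
    exact_mod_cast this
  dsimp only
  rw [← Algebra.smul_def]
  exact Submodule.smul_mem _ _ (Submodule.subset_span ⟨i, hi, rfl⟩)

theorem Matrix.forall_map_pow_eq_zero_iff {E : Type*} [AddCommGroup E] [Module R E]
    (L : Matrix n n R →ₗ[R] E) (M : Matrix n n R) :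
    (∀ k : ℕ, L (M ^ k) = 0) ↔ ∀ k < Fintype.card n, L (M ^ k) = 0 := by
  refine ⟨fun h k _ => h k, fun h k => ?_⟩
  have hspan : Submodule.span R ((M ^ ·) '' Iio (Fintype.card n)) ≤ LinearMap.ker L :=
    Submodule.span_le.2 (by rintro _ ⟨i, hi, rfl⟩; exact h i hi)
  exact hspan (M.pow_mem_span_pow_lt_card k)

end CayleyHamilton

section Orthogonality

variable {ι p q R : Type*} [Fintype ι] [Fintype p] [Fintype q] [CommRing R]

theorem Matrix.dotProduct_sum_mulVec (v : p → R) (M : ι → Matrix p q R) (w : ι → q → R) :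
    v ⬝ᵥ ∑ j, M j *ᵥ w j = ∑ j, ((M j)ᵀ *ᵥ v) ⬝ᵥ w j := by
  simp only [dotProduct_sum, dotProduct_mulVec, mulVec_transpose]

theorem Matrix.forall_transpose_mulVec_eq_zero_iff [DecidableEq ι] [LinearOrder R]
    [IsStrictOrderedRing R] (v : p → R) (M : ι → Matrix p q R) :
    (∀ j, (M j)ᵀ *ᵥ v = 0) ↔ ∀ w : ι → q → R, v ⬝ᵥ ∑ j, M j *ᵥ w j = 0 := by
  refine ⟨fun h w => by simp [dotProduct_sum_mulVec, h], fun h j => ?_⟩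
  have hj := h (Pi.single j ((M j)ᵀ *ᵥ v))
  rw [dotProduct_sum_mulVec, Finset.sum_eq_single j (fun i _ hi => by simp [hi]) (by simp),
    Pi.single_eq_same] at hj
  exact dotProduct_self_eq_zero.mp hj

end Orthogonality

theorem output_vanishing_tfae_general
    (n m : ℕ)
    (A : Matrix (Fin n) (Fin n) ℝ) (B : Matrix (Fin n) (Fin m) ℝ)
    (R : Set (Fin n → ℝ))
    (hR : R = {x : Fin n → ℝ | ∃ w : Fin n → (Fin m → ℝ),
      x = ∑ j : Fin n, (A ^ (j : ℕ) * B).mulVec (w j)})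
    (v : Fin n → ℝ) :
    ((∀ t : ℝ, 0 ≤ t → Bᵀ.mulVec ((exp (t • Aᵀ)).mulVec v) = 0) ↔
      (∀ j : ℕ, j < n → Bᵀ.mulVec ((Aᵀ ^ j).mulVec v) = 0)) ∧
    ((∀ j : ℕ, j < n → Bᵀ.mulVec ((Aᵀ ^ j).mulVec v) = 0) ↔
      (∀ w ∈ R, ∑ i : Fin n, v i * w i = 0)) := by
  -- Any algebra norm will do: `exp` itself only depends on the topology of the matrices.
  let := Matrix.linftyOpNormedRing (n := Fin n) (α := ℝ)
  let := Matrix.linftyOpNormedAlgebra (n := Fin n) (R := ℝ) (α := ℝ)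
  let L : Matrix (Fin n) (Fin n) ℝ →ₗ[ℝ] (Fin m → ℝ) :=
    Bᵀ.mulVecLin ∘ₗ LinearMap.applyₗ v ∘ₗ Matrix.toLin'.toLinearMap
  have hpow := Matrix.forall_map_pow_eq_zero_iff L Aᵀ
  rw [Fintype.card_fin] at hpow
  refine ⟨(L.toContinuousLinearMap.map_exp_smul_eq_zero_iff Aᵀ).trans hpow, ?_⟩
  have horth := Matrix.forall_transpose_mulVec_eq_zero_iff v fun j : Fin n => A ^ (j : ℕ) * B
  simp only [transpose_mul, transpose_pow, ← mulVec_mulVec, Fin.forall_iff] at horth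
  subst hR
  simpa [dotProduct] using horth

/-- **Cayley–Hamilton unique continuation for the output of the matrix exponential.**
The following are equivalent: (a) `Bᵀ e^{tAᵀ} v = 0` for all `t ≥ 0`;
(b) `Bᵀ (Aᵀ)^j v = 0` for `j = 0, …, n-1`;
(c) `v` is orthogonal to the controllable subspace. -/
theorem output_vanishing_tfae
    (n m : ℕ) (hn : 0 < n) (hm : 0 < m)
    (A : Matrix (Fin n) (Fin n) ℝ) (B : Matrix (Fin n) (Fin m) ℝ)
    (R : Set (Fin n → ℝ))
    (hR : R = {x : Fin n → ℝ | ∃ w : Fin n → (Fin m → ℝ),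
      x = ∑ j : Fin n, (A ^ (j : ℕ) * B).mulVec (w j)})
    (v : Fin n → ℝ) :
    ((∀ t : ℝ, 0 ≤ t → Bᵀ.mulVec ((exp (t • Aᵀ)).mulVec v) = 0) ↔
      (∀ j : ℕ, j < n → Bᵀ.mulVec ((Aᵀ ^ j).mulVec v) = 0)) ∧
    ((∀ j : ℕ, j < n → Bᵀ.mulVec ((Aᵀ ^ j).mulVec v) = 0) ↔
      (∀ w ∈ R, ∑ i : Fin n, v i * w i = 0)) :=
  output_vanishing_tfae_general n m A B R hR v
end

section
/- Leading-order factorization of the output near a zero: Let n, m be positive integers, A ∈ ℝ^{n×n}, B ∈ ℝ^{n×m}, and let w ∈ ℝⁿ be such that Bᵀ (Aᵀ)^j w ≠ 0 for some j ∈ ℕ. Let p := min{ j ∈ ℕ : Bᵀ (Aᵀ)^j w ≠ 0 } and a := (1/p!)·Bᵀ (Aᵀ)^p w. Then p ≤ n − 1, a ≠ 0, and there exists a continuous function b : ℝ → ℝᵐ with sup_{|s| ≤ 1} ‖b(s)‖ < ∞ such that for every s ∈ ℝ: Bᵀ e^{sAᵀ} w = s^p · ( a + s·b(s) ). -/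
/-!
Write `M = Aᵀ` and `L X = Bᵀ X w`, so that the output is `L (e^{sM}) = ∑ₖ sᵏ/k! · L (Mᵏ)`.
Splitting the exponential series after the term of order `p` gives
`e^{sM} = ∑_{k ≤ p} sᵏ/k! · Mᵏ + s^{p+1} T(s)`, where the tail `T` is continuous by the
Weierstrass M-test; the terms below `p` are killed by `L`, and `b := L ∘ T`.
By Cayley–Hamilton every power of `M` lies in the span of `M⁰, …, M^{n-1}`, so a linear map
vanishing on these vanishes on all powers; hence `p < n`.
-/

open Matrix NormedSpace

/-- The Euclidean norm of a finite real vector. -/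
noncomputable def euclNorm {ι : Type*} [Fintype ι] (x : ι → ℝ) : ℝ :=
  Real.sqrt (∑ i, x i ^ 2)

lemma continuous_euclNorm {ι : Type*} [Fintype ι] : Continuous (euclNorm (ι := ι)) := by
  unfold euclNorm
  fun_prop

section CayleyHamilton

variable {R ι : Type*} [CommRing R] [Nontrivial R] [Fintype ι] [DecidableEq ι]

open Polynomial in
theorem Matrix.pow_mem_span_pow_lt_card_s10 (M : Matrix ι ι R) (k : ℕ) :
    M ^ k ∈ Submodule.span R (Set.range fun i : Fin (Fintype.card ι) => M ^ (i : ℕ)) := by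
  have hdeg : (X ^ k %ₘ M.charpoly).degree < Fintype.card ι := by
    simpa [M.charpoly_degree_eq_dim] using degree_modByMonic_lt (X ^ k) M.charpoly_monic
  rw [pow_eq_aeval_mod_charpoly, aeval_eq_sum_range]
  refine Submodule.sum_mem _ fun i _ => ?_
  by_cases hi : i < Fintype.card ι
  · exact Submodule.smul_mem _ _ (Submodule.subset_span ⟨⟨i, hi⟩, rfl⟩)
  · rw [coeff_eq_zero_of_degree_lt (hdeg.trans_le (by exact_mod_cast not_lt.1 hi)), zero_smul]
    exact Submodule.zero_mem _

theorem Matrix.exists_lt_card_map_pow_ne_zero {V : Type*} [AddCommGroup V] [Module R V]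
    (M : Matrix ι ι R) (L : Matrix ι ι R →ₗ[R] V) (h : ∃ j, L (M ^ j) ≠ 0) :
    ∃ j < Fintype.card ι, L (M ^ j) ≠ 0 := by
  by_contra! hzero
  obtain ⟨j, hj⟩ := h
  have hspan : Submodule.span R (Set.range fun i : Fin (Fintype.card ι) => M ^ (i : ℕ)) ≤
      LinearMap.ker L :=
    Submodule.span_le.2 <| Set.range_subset_iff.2 fun i => hzero i i.2
  exact hj (hspan (M.pow_mem_span_pow_lt_card_s10 j))

end CayleyHamilton

section ExpTail

variable {𝔸 : Type*} [NormedRing 𝔸] [NormedAlgebra ℝ 𝔸]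

noncomputable def expTail (x : 𝔸) (q : ℕ) (s : ℝ) : 𝔸 :=
  ∑' k, (((k + q).factorial : ℝ)⁻¹ * s ^ k) • x ^ (k + q)

lemma norm_expTail_term_le (x : 𝔸) (q k : ℕ) {s r : ℝ} (hs : |s| ≤ r) :
    ‖(((k + q).factorial : ℝ)⁻¹ * s ^ k) • x ^ (k + q)‖ ≤
      ‖x ^ q‖ * ‖((k.factorial : ℝ)⁻¹) • (r • x) ^ k‖ := by
  have hr : 0 ≤ r := (abs_nonneg s).trans hs
  have hfact : ((k + q).factorial : ℝ)⁻¹ ≤ (k.factorial : ℝ)⁻¹ :=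
    inv_anti₀ (by positivity) (by exact_mod_cast Nat.factorial_le (Nat.le_add_right k q))
  simp only [smul_pow, norm_smul, norm_mul, norm_inv, norm_pow, Real.norm_eq_abs, Nat.abs_cast,
    abs_of_nonneg hr, pow_add]
  calc ((k + q).factorial : ℝ)⁻¹ * |s| ^ k * ‖x ^ k * x ^ q‖
      ≤ (k.factorial : ℝ)⁻¹ * r ^ k * (‖x ^ k‖ * ‖x ^ q‖) := by
        gcongr
        exact norm_mul_le _ _
    _ = _ := by ring

variable [CompleteSpace 𝔸]

lemma summable_expTail_term (x : 𝔸) (q : ℕ) (s : ℝ) :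
    Summable fun k => (((k + q).factorial : ℝ)⁻¹ * s ^ k) • x ^ (k + q) :=
  .of_norm_bounded ((norm_expSeries_summable' (𝕂 := ℝ) (|s| • x)).mul_left ‖x ^ q‖)
    fun k => norm_expTail_term_le x q k le_rfl

lemma continuous_expTail (x : 𝔸) (q : ℕ) : Continuous (expTail x q) := by
  refine continuous_iff_continuousAt.2 fun s₀ => ?_
  have hball : Metric.ball (0 : ℝ) (|s₀| + 1) ∈ nhds s₀ :=
    Metric.isOpen_ball.mem_nhds (by simp)
  refine (continuousOn_tsum (fun k => by fun_prop)
    ((norm_expSeries_summable' (𝕂 := ℝ) ((|s₀| + 1) • x)).mul_left ‖x ^ q‖)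
    fun k s hs => norm_expTail_term_le x q k ?_).continuousAt hball
  simpa using (Metric.mem_ball.1 hs).le

lemma exp_smul_eq_sum_add_pow_smul_expTail (x : 𝔸) (q : ℕ) (s : ℝ) :
    exp (s • x) = ∑ k ∈ Finset.range q, ((k.factorial : ℝ)⁻¹ * s ^ k) • x ^ k
      + s ^ q • expTail x q s := by
  have hexp : exp (s • x) = ∑' k, ((k.factorial : ℝ)⁻¹ * s ^ k) • x ^ k := by
    simp only [exp_eq_tsum ℝ, smul_pow, smul_smul, mul_comm]
  rw [hexp, expTail, ← Summable.tsum_const_smul _ (summable_expTail_term x q s),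
    ← Summable.sum_add_tsum_nat_add q]
  · congr 1
    refine tsum_congr fun k => ?_
    rw [smul_smul, pow_add]
    ring_nf
  · exact (expSeries_summable' (𝕂 := ℝ) (s • x)).congr fun k => by
      rw [smul_pow, smul_smul, mul_comm]

end ExpTail

theorem Matrix.exists_continuous_exp_smul_eq_sum_add_pow_smul {ι : Type*} [Fintype ι]
    [DecidableEq ι] (M : Matrix ι ι ℝ) (q : ℕ) :
    ∃ T : ℝ → Matrix ι ι ℝ, Continuous T ∧ ∀ s : ℝ, exp (s • M) =
      ∑ k ∈ Finset.range q, ((k.factorial : ℝ)⁻¹ * s ^ k) • M ^ k + s ^ q • T s := by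
  -- Any matrix norm inducing the product topology makes `Matrix ι ι ℝ` a Banach algebra;
  -- neither `exp` nor continuity depends on which one.
  open scoped Norms.Operator in
  exact ⟨expTail M q, continuous_expTail M q, exp_smul_eq_sum_add_pow_smul_expTail M q⟩

noncomputable def outputMap {R ι κ : Type*} [CommSemiring R] [Fintype ι] (C : Matrix κ ι R)
    (w : ι → R) : Matrix ι ι R →ₗ[R] (κ → R) where
  toFun X := C *ᵥ (X *ᵥ w)
  map_add' X Y := by simp [add_mulVec, mulVec_add]
  map_smul' c X := by simp [smul_mulVec, mulVec_smul]

theorem leading_order_factorization_general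
    (n m : ℕ)
    (A : Matrix (Fin n) (Fin n) ℝ) (B : Matrix (Fin n) (Fin m) ℝ)
    (w : Fin n → ℝ) (hw : ∃ j : ℕ, Bᵀ.mulVec ((Aᵀ ^ j).mulVec w) ≠ 0)
    (p : ℕ) (hp : p = sInf {j : ℕ | Bᵀ.mulVec ((Aᵀ ^ j).mulVec w) ≠ 0})
    (a : Fin m → ℝ)
    (ha : a = ((1 : ℝ) / (Nat.factorial p : ℝ)) • Bᵀ.mulVec ((Aᵀ ^ p).mulVec w)) :
    p ≤ n - 1 ∧ a ≠ 0 ∧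
    ∃ b : ℝ → (Fin m → ℝ), Continuous b ∧
      (∃ Cb : ℝ, ∀ s : ℝ, |s| ≤ 1 → euclNorm (b s) ≤ Cb) ∧
      ∀ s : ℝ, Bᵀ.mulVec ((exp (s • Aᵀ)).mulVec w) = s ^ p • (a + s • b s) := by
  set L := outputMap Bᵀ w
  have hLp : L (Aᵀ ^ p) ≠ 0 := hp ▸ Nat.sInf_mem hw
  have hL_lt : ∀ j < p, L (Aᵀ ^ j) = 0 := fun j hj =>
    not_not.1 (Nat.notMem_of_lt_sInf (hp ▸ hj))
  obtain ⟨T, hT, hexp⟩ := Aᵀ.exists_continuous_exp_smul_eq_sum_add_pow_smul (p + 1)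
  have hb : Continuous (L ∘ T) := L.continuous_of_finiteDimensional.comp hT
  refine ⟨?_, ?_, L ∘ T, hb, ?_, fun s => ?_⟩
  · obtain ⟨j, hjn, hj⟩ := Aᵀ.exists_lt_card_map_pow_ne_zero L hw
    have hpj : p ≤ j := hp ▸ Nat.sInf_le hj
    rw [Fintype.card_fin] at hjn
    omega
  · rw [ha]
    exact smul_ne_zero (by positivity) hLp
  · obtain ⟨C, hC⟩ := IsCompact.exists_bound_of_continuousOn
      (isCompact_Icc (a := (-1 : ℝ)) (b := 1)) (continuous_euclNorm.comp hb).continuousOn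
    exact ⟨C, fun s hs => (le_abs_self _).trans (hC s (abs_le.1 hs))⟩
  · change L (exp (s • Aᵀ)) = _
    rw [hexp, map_add, map_sum, Finset.sum_range_succ,
      Finset.sum_eq_zero fun j hj => by rw [map_smul, hL_lt j (Finset.mem_range.1 hj), smul_zero],
      zero_add, map_smul, map_smul, ha, smul_add, smul_smul, smul_smul, one_div, mul_comm,
      ← pow_succ]
    rfl

/-- **Leading-order factorization of the output near a zero.**
Let `p` be the least `j` with `Bᵀ (Aᵀ)^j w ≠ 0` and `a := (1/p!)·Bᵀ (Aᵀ)^p w`.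
Then `p ≤ n-1`, `a ≠ 0`, and `Bᵀ e^{sAᵀ} w = s^p (a + s·b(s))` for a continuous,
locally bounded function `b`. -/
theorem leading_order_factorization
    (n m : ℕ) (hn : 0 < n) (hm : 0 < m)
    (A : Matrix (Fin n) (Fin n) ℝ) (B : Matrix (Fin n) (Fin m) ℝ)
    (w : Fin n → ℝ) (hw : ∃ j : ℕ, Bᵀ.mulVec ((Aᵀ ^ j).mulVec w) ≠ 0)
    (p : ℕ) (hp : p = sInf {j : ℕ | Bᵀ.mulVec ((Aᵀ ^ j).mulVec w) ≠ 0})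
    (a : Fin m → ℝ)
    (ha : a = ((1 : ℝ) / (Nat.factorial p : ℝ)) • Bᵀ.mulVec ((Aᵀ ^ p).mulVec w)) :
    p ≤ n - 1 ∧ a ≠ 0 ∧
    ∃ b : ℝ → (Fin m → ℝ), Continuous b ∧
      (∃ Cb : ℝ, ∀ s : ℝ, |s| ≤ 1 → euclNorm (b s) ≤ Cb) ∧
      ∀ s : ℝ, Bᵀ.mulVec ((exp (s • Aᵀ)).mulVec w) = s ^ p • (a + s • b s) :=
  leading_order_factorization_general n m A B w hw p hp a ha
end
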